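/- arXiv:1107.1121 — 3 statements merged into one kernel-verified Lean document; each statement's English description precedes it below -/
import Mathlib

section
/- If G is a simple graph on n vertices with clique number ω(G) = ω ≥ 2, then the largest adjacency eigenvalue μ(G) satisfies μ(G)² ≤ 2·(1 − 1/ω)·e(G). -/
/-!
For a unit eigenvector `x` of `μ`, `μ = xᵀAx` is a sum over the `2 e(G)` darts `(i, j)` of
`x i * x j`, so by Cauchy–Schwarz `μ² ≤ 2 e(G) · yᵀAy` with `y i = x i ^ 2`, a probability vector.
The Motzkin–Straus inequality `yᵀAy ≤ (1 - 1/ω) (∑ y)²` for nonnegative `y` finishes the proof.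
It is proved by moving the weight of a vertex `v` onto a non-adjacent vertex `u` with
`(Ay) v ≤ (Ay) u`: this does not decrease `yᵀAy` and shrinks the support, so one may assume that
the support is a clique, and then `yᵀAy ≤ (∑ y)² - ∑ y² ≤ (1 - 1/ω) (∑ y)²`.
-/

open SimpleGraph

/-- The largest eigenvalue (spectral radius) of the adjacency matrix of a graph. -/
noncomputable def specRad {n : ℕ} (G : SimpleGraph (Fin n)) [DecidableRel G.Adj] : ℝ :=
  sSup (spectrum ℝ (G.adjMatrix ℝ))

open Finset Matrix

namespace SimpleGraph

variable {V : Type*}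

section ShiftWeight

variable [DecidableEq V]

/-- Moves the weight of `v` onto `u`. -/
def shiftWeight (y : V → ℝ) (v u : V) : V → ℝ :=
  y + y v • (Pi.single u 1 - Pi.single v 1)

theorem shiftWeight_apply {y : V → ℝ} {u v : V} (huv : u ≠ v) (i : V) :
    shiftWeight y v u i = if i = v then 0 else if i = u then y u + y v else y i := by
  by_cases hiv : i = v
  · subst hiv; simp [shiftWeight, huv.symm]
  · by_cases hiu : i = u
    · subst hiu; simp [shiftWeight, hiv]
    · simp [shiftWeight, hiu, hiv]

theorem shiftWeight_nonneg {y : V → ℝ} (hy : 0 ≤ y) {u v : V} (huv : u ≠ v) :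
    0 ≤ shiftWeight y v u := fun i => by
  rw [Pi.zero_apply, shiftWeight_apply huv]
  split_ifs
  exacts [le_rfl, add_nonneg (hy u) (hy v), hy i]

end ShiftWeight

variable [Fintype V] {G : SimpleGraph V}

theorem sq_sum_le_cliqueNum_mul_sum_sq {y : V → ℝ} (hy : G.IsClique (Function.support y)) :
    (∑ i, y i) ^ 2 ≤ G.cliqueNum * ∑ i, y i ^ 2 := by
  classical
  set s : Finset V := {i | y i ≠ 0}
  have hs : G.IsClique (s : Set V) := by simpa [s, Function.support] using hy
  calc (∑ i, y i) ^ 2 = (∑ i ∈ s, y i) ^ 2 := by rw [sum_filter_ne_zero]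
    _ ≤ #s * ∑ i ∈ s, y i ^ 2 := sq_sum_le_card_mul_sum_sq
    _ ≤ G.cliqueNum * ∑ i, y i ^ 2 := by
        gcongr ?_ * ?_
        · exact_mod_cast hs.card_le_cliqueNum
        · exact sum_le_univ_sum_of_nonneg fun i => sq_nonneg _

variable [DecidableRel G.Adj]

theorem dotProduct_adjMatrix_mulVec_eq_sum_dart {α : Type*} [NonAssocSemiring α] (x y : V → α) :
    x ⬝ᵥ G.adjMatrix α *ᵥ y = ∑ d : G.Dart, x d.fst * y d.snd := by
  rw [dotProduct_mulVec_adjMatrix, ← Fintype.sum_prod_type', ← sum_filter]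
  exact (sum_bij' (fun d _ => d.toProd) (fun p hp => ⟨p, (mem_filter.1 hp).2⟩)
    (fun d _ => by simp) (fun _ _ => mem_univ _) (fun _ _ => rfl) (fun _ _ => rfl)
    (fun _ _ => rfl)).symm

theorem dotProduct_adjMatrix_mulVec_le_sq_sum_sub_sum_sq {y : V → ℝ} (hy : 0 ≤ y) :
    y ⬝ᵥ G.adjMatrix ℝ *ᵥ y ≤ (∑ i, y i) ^ 2 - ∑ i, y i ^ 2 := by
  classical
  rw [dotProduct_mulVec_adjMatrix]
  calc ∑ i, ∑ j, (if G.Adj i j then y i * y j else 0)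
      ≤ ∑ i, ∑ j, (y i * y j - if i = j then y i * y j else 0) := by
        gcongr with i _ j _
        by_cases hij : i = j
        · simp [hij]
        · split_ifs <;> simp [mul_nonneg (hy i) (hy j)]
    _ = (∑ i, y i) ^ 2 - ∑ i, y i ^ 2 := by
        simp [sum_sub_distrib, sq, sum_mul_sum]

theorem dotProduct_adjMatrix_mulVec_le_of_isClique_support {y : V → ℝ} (hy : 0 ≤ y)
    (hclique : G.IsClique (Function.support y)) :
    y ⬝ᵥ G.adjMatrix ℝ *ᵥ y ≤ (1 - 1 / G.cliqueNum) * (∑ i, y i) ^ 2 := by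
  have hsq : (∑ i, y i) ^ 2 / G.cliqueNum ≤ ∑ i, y i ^ 2 := by
    rcases (G.cliqueNum).eq_zero_or_pos with h | h
    · simp [h, sum_nonneg fun i _ => sq_nonneg (y i)]
    · rw [div_le_iff₀' (by exact_mod_cast h)]
      exact sq_sum_le_cliqueNum_mul_sum_sq hclique
  calc y ⬝ᵥ G.adjMatrix ℝ *ᵥ y ≤ (∑ i, y i) ^ 2 - ∑ i, y i ^ 2 :=
        dotProduct_adjMatrix_mulVec_le_sq_sum_sub_sum_sq hy
    _ ≤ (1 - 1 / G.cliqueNum) * (∑ i, y i) ^ 2 := by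
        rw [sub_mul, one_mul, one_div_mul_eq_div]
        linarith

variable [DecidableEq V]

theorem sum_shiftWeight (y : V → ℝ) (v u : V) : ∑ i, shiftWeight y v u i = ∑ i, y i := by
  simp [shiftWeight, sum_add_distrib, ← mul_sum, sum_sub_distrib]

theorem support_shiftWeight_subset {y : V → ℝ} {u v : V} (huv : u ≠ v) (hu : y u ≠ 0) :
    ({i | shiftWeight y v u i ≠ 0} : Finset V) ⊆ ({i | y i ≠ 0} : Finset V).erase v := by
  intro i
  simp only [mem_filter, mem_univ, true_and, mem_erase, shiftWeight_apply huv]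
  split_ifs with hiv hiu
  · simp
  · exact fun _ => ⟨hiv, hiu ▸ hu⟩
  · exact fun h => ⟨hiv, h⟩

theorem dotProduct_adjMatrix_mulVec_le_shiftWeight {y : V → ℝ} (hy : 0 ≤ y)
    {u v : V} (hnadj : ¬ G.Adj u v)
    (hle : (G.adjMatrix ℝ *ᵥ y) v ≤ (G.adjMatrix ℝ *ᵥ y) u) :
    y ⬝ᵥ G.adjMatrix ℝ *ᵥ y ≤ shiftWeight y v u ⬝ᵥ G.adjMatrix ℝ *ᵥ shiftWeight y v u := by
  set A := G.adjMatrix ℝ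
  set d : V → ℝ := Pi.single u 1 - Pi.single v 1
  have hdA : d ⬝ᵥ A *ᵥ y = (A *ᵥ y) u - (A *ᵥ y) v := by
    simp [d, sub_dotProduct, single_dotProduct]
  have hAd : y ⬝ᵥ A *ᵥ d = d ⬝ᵥ A *ᵥ y := by
    rw [dotProduct_mulVec, ← mulVec_transpose, G.transpose_adjMatrix, dotProduct_comm]
  -- the shift is along a non-edge, so the quadratic term vanishes
  have hdd : d ⬝ᵥ A *ᵥ d = 0 := by
    have hnadj' : ¬ G.Adj v u := fun h => hnadj h.symm
    simp [A, d, sub_dotProduct, mulVec_sub, mulVec_single, hnadj, hnadj']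
  have hexpand : shiftWeight y v u ⬝ᵥ A *ᵥ shiftWeight y v u
      = y ⬝ᵥ A *ᵥ y + 2 * y v * ((A *ᵥ y) u - (A *ᵥ y) v) := by
    change (y + y v • d) ⬝ᵥ A *ᵥ (y + y v • d) = _
    simp only [mulVec_add, mulVec_smul, add_dotProduct, dotProduct_add,
      smul_dotProduct, dotProduct_smul, smul_eq_mul, hAd, hdd, hdA]
    ring
  rw [hexpand]
  nlinarith [mul_nonneg (hy v) (sub_nonneg.2 hle)]

theorem dotProduct_adjMatrix_mulVec_le_cliqueNum {y : V → ℝ} (hy : 0 ≤ y) :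
    y ⬝ᵥ G.adjMatrix ℝ *ᵥ y ≤ (1 - 1 / G.cliqueNum) * (∑ i, y i) ^ 2 := by
  induction hk : #({i | y i ≠ 0} : Finset V) using Nat.strong_induction_on generalizing y with
  | _ k ih =>
  by_cases hclique : G.IsClique (Function.support y)
  · exact dotProduct_adjMatrix_mulVec_le_of_isClique_support hy hclique
  have shift : ∀ u v, u ≠ v → y u ≠ 0 → y v ≠ 0 → ¬ G.Adj u v →
      (G.adjMatrix ℝ *ᵥ y) v ≤ (G.adjMatrix ℝ *ᵥ y) u →
      y ⬝ᵥ G.adjMatrix ℝ *ᵥ y ≤ (1 - 1 / G.cliqueNum) * (∑ i, y i) ^ 2 := by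
    intro u v huv hu hv hnadj hle
    have hlt : #({i | shiftWeight y v u i ≠ 0} : Finset V) < k :=
      hk ▸ (card_le_card (support_shiftWeight_subset huv hu)).trans_lt
        (card_erase_lt_of_mem (by simpa using hv))
    calc y ⬝ᵥ G.adjMatrix ℝ *ᵥ y
        ≤ shiftWeight y v u ⬝ᵥ G.adjMatrix ℝ *ᵥ shiftWeight y v u :=
          dotProduct_adjMatrix_mulVec_le_shiftWeight hy hnadj hle
      _ ≤ (1 - 1 / G.cliqueNum) * (∑ i, y i) ^ 2 := by
          rw [← sum_shiftWeight y v u]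
          exact ih _ hlt (shiftWeight_nonneg hy huv) rfl
  obtain ⟨u, hu, v, hv, huv, hnadj⟩ : ∃ u, y u ≠ 0 ∧ ∃ v, y v ≠ 0 ∧ u ≠ v ∧ ¬ G.Adj u v := by
    simpa [IsClique, Set.Pairwise] using hclique
  rcases le_total ((G.adjMatrix ℝ *ᵥ y) v) ((G.adjMatrix ℝ *ᵥ y) u) with hle | hle
  · exact shift u v huv hu hv hnadj hle
  · exact shift v u huv.symm hv hu (fun h => hnadj h.symm) hle

theorem sq_dotProduct_adjMatrix_mulVec_le (x : V → ℝ) :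
    (x ⬝ᵥ G.adjMatrix ℝ *ᵥ x) ^ 2 ≤
      2 * (1 - 1 / G.cliqueNum) * #G.edgeFinset * (x ⬝ᵥ x) ^ 2 := by
  set y : V → ℝ := fun i => x i ^ 2
  calc (x ⬝ᵥ G.adjMatrix ℝ *ᵥ x) ^ 2 = (∑ d : G.Dart, x d.fst * x d.snd) ^ 2 := by
        rw [dotProduct_adjMatrix_mulVec_eq_sum_dart]
    _ ≤ Fintype.card G.Dart * ∑ d : G.Dart, (x d.fst * x d.snd) ^ 2 := sq_sum_le_card_mul_sum_sq
    _ = Fintype.card G.Dart * (y ⬝ᵥ G.adjMatrix ℝ *ᵥ y) := by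
        simp_rw [dotProduct_adjMatrix_mulVec_eq_sum_dart, y, mul_pow]
    _ ≤ Fintype.card G.Dart * ((1 - 1 / G.cliqueNum) * (∑ i, y i) ^ 2) := by
        gcongr
        exact dotProduct_adjMatrix_mulVec_le_cliqueNum fun i => sq_nonneg (x i)
    _ = 2 * (1 - 1 / G.cliqueNum) * #G.edgeFinset * (x ⬝ᵥ x) ^ 2 := by
        rw [dart_card_eq_twice_card_edges]
        simp only [y, dotProduct, sq (x _)]
        push_cast
        ring

theorem sq_le_of_mem_spectrum_adjMatrix {μ : ℝ} (hμ : μ ∈ spectrum ℝ (G.adjMatrix ℝ)) :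
    μ ^ 2 ≤ 2 * (1 - 1 / G.cliqueNum) * #G.edgeFinset := by
  rw [← spectrum_toLin', ← Module.End.hasEigenvalue_iff_mem_spectrum] at hμ
  obtain ⟨x, hx⟩ := hμ.exists_hasEigenvector
  have hpos : 0 < x ⬝ᵥ x :=
    (sum_nonneg fun i _ => mul_self_nonneg (x i)).lt_of_ne' (dotProduct_self_eq_zero.not.2 hx.2)
  have hform : x ⬝ᵥ G.adjMatrix ℝ *ᵥ x = μ * (x ⬝ᵥ x) := by
    rw [← toLin'_apply, hx.apply_eq_smul, dotProduct_smul, smul_eq_mul]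
  have h := sq_dotProduct_adjMatrix_mulVec_le (G := G) x
  rw [hform, mul_pow] at h
  exact le_of_mul_le_mul_right h (by positivity)

end SimpleGraph

theorem statement12_general (n ω : ℕ) (G : SimpleGraph (Fin n)) [DecidableRel G.Adj]
    (hω : G.cliqueNum = ω) :
    specRad G ^ 2 ≤ 2 * (1 - 1 / (ω : ℝ)) * (G.edgeFinset.card : ℝ) := by
  subst hω
  rcases (spectrum ℝ (G.adjMatrix ℝ)).eq_empty_or_nonempty with hempty | hne
  · have h : 1 / (G.cliqueNum : ℝ) ≤ 1 := by simpa using Nat.cast_inv_le_one (α := ℝ) G.cliqueNum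
    rw [specRad, hempty, Real.sSup_empty]
    nlinarith [(G.edgeFinset.card.cast_nonneg : (0 : ℝ) ≤ _)]
  · exact sq_le_of_mem_spectrum_adjMatrix (hne.csSup_mem finite_real_spectrum)

/-- If `G` is a graph of order `n` with clique number `ω ≥ 2`, then
`μ(G)² ≤ 2 (1 - 1/ω) e(G)`. -/
theorem statement12 (n ω : ℕ) (G : SimpleGraph (Fin n)) [DecidableRel G.Adj]
    (hω : G.cliqueNum = ω) (hω2 : 2 ≤ ω) :
    specRad G ^ 2 ≤ 2 * (1 - 1 / (ω : ℝ)) * (G.edgeFinset.card : ℝ) :=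
  statement12_general n ω G hω
end

section
/- Let r ≥ 1 and let G be a simple graph with clique number ω(G) = ω ≥ 1 and at least one edge. Then μ(G)^r ≤ (1 − 1/ω)·w_r(G), where w_r(G) is the number of r-walks in G, i.e. the number of sequences of vertices v_1,…,v_r such that v_i is adjacent to v_{i+1} for each i = 1,…,r−1. -/
open SimpleGraph

/-- The number of `r`-walks in `G`: sequences of `r` vertices in which consecutive vertices
are adjacent, i.e. walks on `r - 1` edges, counted over all ordered pairs of endpoints. -/
noncomputable def walkCount {n : ℕ} (G : SimpleGraph (Fin n)) [DecidableRel G.Adj]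
    (r : ℕ) : ℕ :=
  ∑ u : Fin n, ∑ v : Fin n, (G.finsetWalkLength (r - 1) u v).card

/-!
By the Motzkin–Straus inequality, `z ⬝ᵥ A z ≤ (1 - 1/ω) (∑ z)²` for every `z ≥ 0`: moving the
weight of a vertex `v` onto a non-neighbour `u` with `(A z) v ≤ (A z) u` does not decrease the
form and shrinks the support, so one may assume the support is a clique, where Cauchy–Schwarz
applies. With `z = A^m 𝟙` this reads `w_{2m+2} ≤ γ w_{m+1}²` for `γ = 1 - 1/ω`, and iterating,
`γ w_{2^k r} ≤ (γ w_r)^{2^k}`. Every eigenvalue satisfies `|μ|^m ≤ ‖A^m‖_∞ ≤ w_{m+1}`, hence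
`(μ^r)^{2^k} ≤ |μ| w_{2^k r} ≤ (|μ|/γ) (γ w_r)^{2^k}`, and taking `2^k`-th roots as `k → ∞`
gives `μ^r ≤ γ w_r`.
-/

open Matrix Finset

theorem Matrix.abs_le_sum_abs_of_mem_spectrum {V : Type*} [Fintype V] [DecidableEq V]
    (M : Matrix V V ℝ) {k : ℝ} (hk : k ∈ spectrum ℝ M) :
    |k| ≤ ∑ i, ∑ j, |M i j| := by
  cases isEmpty_or_nonempty V
  · simp [spectrum.of_subsingleton] at hk
  let _ := Matrix.linftyOpNormedRing (n := V) (α := ℝ)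
  let _ := Matrix.linftyOpNormedAlgebra (n := V) (α := ℝ) (R := ℝ)
  have hrow : (univ.sup fun i => ∑ j, ‖M i j‖₊) ≤ ∑ i, ∑ j, ‖M i j‖₊ :=
    Finset.sup_le fun i hi => single_le_sum (f := fun i => ∑ j, ‖M i j‖₊) (fun _ _ => zero_le) hi
  calc |k| = ‖k‖ := (Real.norm_eq_abs k).symm
    _ ≤ ‖M‖ := spectrum.norm_le_norm_of_mem hk
    _ ≤ ∑ i, ∑ j, |M i j| := by
      rw [linfty_opNorm_def]
      simpa only [← NNReal.coe_le_coe, NNReal.coe_sum, coe_nnnorm, Real.norm_eq_abs] using hrow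

theorem le_of_forall_pow_two_pow_le_mul {a b C : ℝ} (hb : 0 ≤ b)
    (h : ∀ k : ℕ, a ^ 2 ^ k ≤ C * b ^ 2 ^ k) : a ≤ b := by
  by_contra! hba
  rcases hb.eq_or_lt with rfl | hb
  · simpa [hba.not_ge] using h 0
  have hq : 1 < a / b := (one_lt_div hb).2 hba
  obtain ⟨k, hk⟩ := pow_unbounded_of_one_lt C hq
  have hC : (a / b) ^ 2 ^ k ≤ C := by
    rw [div_pow, div_le_iff₀ (by positivity)]
    exact h k
  exact (hk.trans_le ((pow_le_pow_right₀ hq.le Nat.lt_two_pow_self.le).trans hC)).false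

theorem mul_apply_two_pow_mul_succ_sub_one_le {f : ℕ → ℝ} {γ : ℝ} (hγ : 0 ≤ γ)
    (hf : ∀ m, 0 ≤ f m) (h : ∀ m, f (2 * m + 1) ≤ γ * f m ^ 2) (s k : ℕ) :
    γ * f (2 ^ k * (s + 1) - 1) ≤ (γ * f s) ^ 2 ^ k := by
  induction k with
  | zero => simp
  | succ k ih =>
    set N := 2 ^ k * (s + 1) - 1
    have hidx : 2 ^ (k + 1) * (s + 1) - 1 = 2 * N + 1 := by
      have hpos : 0 < 2 ^ k * (s + 1) := by positivity
      have hdouble : 2 ^ (k + 1) * (s + 1) = 2 * (2 ^ k * (s + 1)) := by ring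
      omega
    calc γ * f (2 ^ (k + 1) * (s + 1) - 1) = γ * f (2 * N + 1) := by rw [hidx]
      _ ≤ γ * (γ * f N ^ 2) := mul_le_mul_of_nonneg_left (h N) hγ
      _ = (γ * f N) ^ 2 := by ring
      _ ≤ ((γ * f s) ^ 2 ^ k) ^ 2 := pow_le_pow_left₀ (mul_nonneg hγ (hf N)) ih 2
      _ = (γ * f s) ^ 2 ^ (k + 1) := by rw [← pow_mul, pow_succ]

namespace SimpleGraph

theorem two_le_cliqueNum_of_adj {V : Type*} [Finite V] {G : SimpleGraph V} {a b : V}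
    (hab : G.Adj a b) : 2 ≤ G.cliqueNum := by
  classical
  have hpair : G.IsClique (({a, b} : Finset V) : Set V) := by
    rw [coe_pair]
    exact G.isClique_pair.2 fun _ => hab
  simpa [card_pair hab.ne] using hpair.card_le_cliqueNum

section MotzkinStraus

variable {V : Type*} [Fintype V] (G : SimpleGraph V) [DecidableRel G.Adj]

theorem dotProduct_adjMatrix_mulVec_of_isClique {z : V → ℝ}
    (hz : G.IsClique (univ.filter (z · ≠ 0) : Set V)) :
    z ⬝ᵥ (G.adjMatrix ℝ *ᵥ z) = (∑ v, z v) ^ 2 - ∑ v, z v ^ 2 := by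
  classical
  have hterm (u v : V) :
      z u * (G.adjMatrix ℝ u v * z v) = z u * z v - if u = v then z u ^ 2 else 0 := by
    by_cases huv : u = v
    · subst huv; simp [sq]
    by_cases hzu : z u = 0
    · simp [hzu, huv]
    by_cases hzv : z v = 0
    · simp [hzv, huv]
    have hadj : G.Adj u v := hz (by simpa using hzu) (by simpa using hzv) huv
    simp [adjMatrix_apply, hadj, huv]
  simp only [dotProduct, mulVec, mul_sum, hterm, sum_sub_distrib, sum_ite_eq, mem_univ, if_true]
  rw [sq, sum_mul_sum]

theorem dotProduct_adjMatrix_mulVec_le_of_isClique {z : V → ℝ}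
    (hz : G.IsClique (univ.filter (z · ≠ 0) : Set V)) :
    z ⬝ᵥ (G.adjMatrix ℝ *ᵥ z) ≤ (1 - 1 / G.cliqueNum) * (∑ v, z v) ^ 2 := by
  set S := univ.filter (z · ≠ 0)
  have hcs : (∑ v, z v) ^ 2 ≤ #S * ∑ v, z v ^ 2 := by
    rw [← sum_filter_of_ne (f := z) (p := (z · ≠ 0)) (fun _ _ h => h),
      ← sum_filter_of_ne (f := (z · ^ 2)) (p := (z · ≠ 0)) (fun _ _ h => by simpa using h)]
    exact sq_sum_le_card_mul_sum_sq (s := S) (f := z)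
  have hS : (#S : ℝ) ≤ G.cliqueNum := by exact_mod_cast hz.card_le_cliqueNum
  have hsq : (∑ v, z v) ^ 2 / G.cliqueNum ≤ ∑ v, z v ^ 2 := by
    refine div_le_of_le_mul₀ (Nat.cast_nonneg _) (sum_nonneg fun _ _ => sq_nonneg _) ?_
    rw [mul_comm]
    exact hcs.trans (mul_le_mul_of_nonneg_right hS (sum_nonneg fun _ _ => sq_nonneg _))
  rw [dotProduct_adjMatrix_mulVec_of_isClique G hz]
  linarith [div_eq_mul_one_div ((∑ v, z v) ^ 2) (G.cliqueNum : ℝ)]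

theorem dotProduct_adjMatrix_mulVec_add_smul_single_sub_single [DecidableEq V] {u v : V}
    (hadj : ¬ G.Adj u v) (z : V → ℝ) (t : ℝ) :
    (z + t • (Pi.single u 1 - Pi.single v 1)) ⬝ᵥ
        (G.adjMatrix ℝ *ᵥ (z + t • (Pi.single u 1 - Pi.single v 1))) =
      z ⬝ᵥ (G.adjMatrix ℝ *ᵥ z) + 2 * t * ((G.adjMatrix ℝ *ᵥ z) u - (G.adjMatrix ℝ *ᵥ z) v) := by
  set d : V → ℝ := Pi.single u 1 - Pi.single v 1
  have hdz : d ⬝ᵥ (G.adjMatrix ℝ *ᵥ z) = (G.adjMatrix ℝ *ᵥ z) u - (G.adjMatrix ℝ *ᵥ z) v := by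
    simp [d, sub_dotProduct]
  have hzd : z ⬝ᵥ (G.adjMatrix ℝ *ᵥ d) = d ⬝ᵥ (G.adjMatrix ℝ *ᵥ z) := by
    rw [dotProduct_mulVec, ← mulVec_transpose, transpose_adjMatrix, dotProduct_comm]
  have hdd : d ⬝ᵥ (G.adjMatrix ℝ *ᵥ d) = 0 := by
    have hadj' : ¬ G.Adj v u := fun h => hadj h.symm
    simp [d, mulVec_sub, sub_dotProduct, dotProduct_sub, mulVec_single, adjMatrix_apply, hadj,
      hadj']
  simp only [mulVec_add, mulVec_smul, add_dotProduct, dotProduct_add, smul_dotProduct,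
    dotProduct_smul, smul_eq_mul, hzd, hdz, hdd]
  ring

theorem dotProduct_adjMatrix_mulVec_le {z : V → ℝ} (hz : 0 ≤ z) :
    z ⬝ᵥ (G.adjMatrix ℝ *ᵥ z) ≤ (1 - 1 / G.cliqueNum) * (∑ v, z v) ^ 2 := by
  classical
  induction hk : #(univ.filter (z · ≠ 0)) using Nat.strong_induction_on generalizing z with
  | _ k ih =>
  by_cases hcl : G.IsClique (univ.filter (z · ≠ 0) : Set V)
  · exact dotProduct_adjMatrix_mulVec_le_of_isClique G hcl
  obtain ⟨u, hu, v, hv, huv, hadj⟩ : ∃ u, z u ≠ 0 ∧ ∃ v, z v ≠ 0 ∧ u ≠ v ∧ ¬ G.Adj u v := by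
    simpa [isClique_iff, Set.Pairwise] using hcl
  wlog hle : (G.adjMatrix ℝ *ᵥ z) v ≤ (G.adjMatrix ℝ *ᵥ z) u generalizing u v
  · exact this v hv u hu huv.symm (fun h => hadj h.symm) (le_of_not_ge hle)
  set z' := z + z v • (Pi.single u 1 - Pi.single v 1) with hz'
  have hz'_apply (w : V) :
      z' w = z w + z v * ((Pi.single u 1 : V → ℝ) w - (Pi.single v 1 : V → ℝ) w) := rfl
  have hz'_nonneg : 0 ≤ z' := by
    intro w
    have hzw : 0 ≤ z w := hz w
    have hzv : 0 ≤ z v := hz v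
    rw [Pi.zero_apply, hz'_apply]
    simp only [Pi.single_apply]
    split_ifs <;> subst_vars <;>
      simp only [sub_self, sub_zero, zero_sub, mul_one, mul_neg, mul_zero, add_zero] <;> linarith
  have hsum : ∑ w, z' w = ∑ w, z w := by
    simp [hz'_apply, sum_add_distrib, ← mul_sum, sum_sub_distrib]
  have hsupp : univ.filter (z' · ≠ 0) ⊂ univ.filter (z · ≠ 0) := by
    refine (ssubset_iff_of_subset fun w => ?_).2 ⟨v, by simpa using hv, by simp [hz'_apply, huv]⟩
    simp only [mem_filter, mem_univ, true_and, hz'_apply, Pi.single_apply]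
    split_ifs <;> subst_vars <;> simp_all
  calc z ⬝ᵥ (G.adjMatrix ℝ *ᵥ z) ≤ z' ⬝ᵥ (G.adjMatrix ℝ *ᵥ z') := by
        rw [hz', dotProduct_adjMatrix_mulVec_add_smul_single_sub_single G hadj]
        have := mul_nonneg (mul_nonneg zero_le_two (hz v)) (sub_nonneg.2 hle)
        linarith
    _ ≤ (1 - 1 / G.cliqueNum) * (∑ w, z' w) ^ 2 := ih _ (hk ▸ card_lt_card hsupp) hz'_nonneg rfl
    _ = (1 - 1 / G.cliqueNum) * (∑ w, z w) ^ 2 := by rw [hsum]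

end MotzkinStraus

variable {V : Type*} [Fintype V] [DecidableEq V] (G : SimpleGraph V) [DecidableRel G.Adj]

theorem adjMatrix_pow_apply_nonneg (m : ℕ) (u v : V) : 0 ≤ (G.adjMatrix ℝ ^ m) u v := by
  rw [adjMatrix_pow_apply_eq_card_walk]
  positivity

theorem sum_adjMatrix_pow_two_mul_add_one_le (m : ℕ) :
    ∑ u, ∑ v, (G.adjMatrix ℝ ^ (2 * m + 1)) u v ≤
      (1 - 1 / G.cliqueNum) * (∑ u, ∑ v, (G.adjMatrix ℝ ^ m) u v) ^ 2 := by
  set A := G.adjMatrix ℝ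
  have hsum (M : Matrix V V ℝ) : ∑ u, ∑ v, M u v = 1 ⬝ᵥ (M *ᵥ 1) := by
    simp [dotProduct, mulVec]
  have hz : 0 ≤ A ^ m *ᵥ 1 := fun v =>
    sum_nonneg fun u _ => mul_nonneg (G.adjMatrix_pow_apply_nonneg m v u) zero_le_one
  have hquad : (A ^ m *ᵥ 1) ⬝ᵥ (A *ᵥ (A ^ m *ᵥ 1)) = 1 ⬝ᵥ (A ^ (2 * m + 1) *ᵥ 1) := by
    have hsymm : A ^ m *ᵥ 1 = 1 ᵥ* A ^ m := by
      rw [← vecMul_transpose, transpose_pow, transpose_adjMatrix]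
    rw [mulVec_mulVec, ← pow_succ', hsymm, ← dotProduct_mulVec, mulVec_mulVec, ← pow_add,
      two_mul, add_assoc]
  have hlin : ∑ v, (A ^ m *ᵥ 1) v = 1 ⬝ᵥ (A ^ m *ᵥ 1) := by simp [dotProduct]
  rw [hsum, hsum, ← hquad, ← hlin]
  exact G.dotProduct_adjMatrix_mulVec_le hz

theorem abs_pow_le_sum_adjMatrix_pow {k : ℝ} (hk : k ∈ spectrum ℝ (G.adjMatrix ℝ)) (m : ℕ) :
    |k| ^ m ≤ ∑ u, ∑ v, (G.adjMatrix ℝ ^ m) u v := by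
  simpa only [abs_pow, abs_of_nonneg (G.adjMatrix_pow_apply_nonneg m _ _)] using
    (G.adjMatrix ℝ ^ m).abs_le_sum_abs_of_mem_spectrum (spectrum.pow_mem_pow _ m hk)

theorem pow_succ_le_of_mem_spectrum (hω : 2 ≤ G.cliqueNum) {k : ℝ}
    (hk : k ∈ spectrum ℝ (G.adjMatrix ℝ)) (s : ℕ) :
    k ^ (s + 1) ≤ (1 - 1 / G.cliqueNum) * ∑ u, ∑ v, (G.adjMatrix ℝ ^ s) u v := by
  set γ : ℝ := 1 - 1 / G.cliqueNum
  set W : ℕ → ℝ := fun m => ∑ u, ∑ v, (G.adjMatrix ℝ ^ m) u v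
  have hγ : 0 < γ := by
    have : (2 : ℝ) ≤ G.cliqueNum := by exact_mod_cast hω
    rw [sub_pos, div_lt_one (by linarith)]
    linarith
  have hW (m : ℕ) : 0 ≤ W m :=
    sum_nonneg fun u _ => sum_nonneg fun v _ => G.adjMatrix_pow_apply_nonneg m u v
  refine le_of_forall_pow_two_pow_le_mul (C := |k| / γ) (mul_nonneg hγ.le (hW s)) fun j => ?_
  set N := 2 ^ j * (s + 1) - 1
  have hN : 2 ^ j * (s + 1) = N + 1 := by
    have : 0 < 2 ^ j * (s + 1) := by positivity
    omega
  calc (k ^ (s + 1)) ^ 2 ^ j = k ^ N * k := by rw [← pow_mul, mul_comm, hN, pow_succ]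
    _ ≤ |k| ^ N * |k| := by rw [← abs_pow, ← abs_mul]; exact le_abs_self _
    _ ≤ W N * |k| :=
      mul_le_mul_of_nonneg_right (G.abs_pow_le_sum_adjMatrix_pow hk N) (abs_nonneg k)
    _ = |k| / γ * (γ * W N) := by field_simp
    _ ≤ |k| / γ * (γ * W s) ^ 2 ^ j := by
      gcongr
      exact mul_apply_two_pow_mul_succ_sub_one_le hγ.le hW
        G.sum_adjMatrix_pow_two_mul_add_one_le s j

end SimpleGraph

theorem walkCount_succ_eq_sum_adjMatrix_pow {n : ℕ} (G : SimpleGraph (Fin n)) [DecidableRel G.Adj]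
    (s : ℕ) :
    (walkCount G (s + 1) : ℝ) = ∑ u, ∑ v, (G.adjMatrix ℝ ^ s) u v := by
  simp only [walkCount, Nat.add_sub_cancel, Nat.cast_sum, adjMatrix_pow_apply_eq_card_walk,
    card_set_walk_length_eq]

theorem statement13_general (n r ω : ℕ) (hr : 1 ≤ r)
    (G : SimpleGraph (Fin n)) [DecidableRel G.Adj]
    (hω : G.cliqueNum = ω) (hE : G.edgeSet.Nonempty) :
    specRad G ^ r ≤ (1 - 1 / (ω : ℝ)) * (walkCount G r : ℝ) := by
  subst hω
  obtain ⟨a, b, hab⟩ := G.ne_bot_iff_exists_adj.1 (G.edgeSet_nonempty.1 hE)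
  have hμ : specRad G ∈ spectrum ℝ (G.adjMatrix ℝ) :=
    Set.Nonempty.csSup_mem
      ⟨_, (isHermitian_iff_isSymm.2 G.isSymm_adjMatrix).eigenvalues_mem_spectrum_real a⟩
      (Matrix.finite_spectrum _)
  obtain ⟨s, rfl⟩ : ∃ s, r = s + 1 := ⟨r - 1, by omega⟩
  rw [walkCount_succ_eq_sum_adjMatrix_pow]
  exact G.pow_succ_le_of_mem_spectrum (two_le_cliqueNum_of_adj hab) hμ s

/-- Let `r ≥ 1` and let `G` be a graph with clique number `ω ≥ 1` and at least one edge.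
Then `μ(G)^r ≤ (1 - 1/ω) w_r(G)`, where `w_r(G)` is the number of `r`-walks in `G`. -/
theorem statement13 (n r ω : ℕ) (hr : 1 ≤ r)
    (G : SimpleGraph (Fin n)) [DecidableRel G.Adj]
    (hω : G.cliqueNum = ω) (hω1 : 1 ≤ ω) (hE : G.edgeSet.Nonempty) :
    specRad G ^ r ≤ (1 - 1 / (ω : ℝ)) * (walkCount G r : ℝ) :=
  statement13_general n r ω hr G hω hE
end

section
/- If G is a simple graph on n ≥ 1 vertices with independence number α(G) = α, then the largest adjacency eigenvalue satisfies μ(G) ≥ ⌈n/α⌉ − 1. -/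
open SimpleGraph

/-- The independence number of a graph: the largest size of a set of pairwise non-adjacent
vertices. -/
noncomputable def indepNum {V : Type*} [Fintype V] (G : SimpleGraph V) : ℕ :=
  sSup {m | ∃ s : Finset V, s.card = m ∧ ∀ a ∈ s, ∀ b ∈ s, a ≠ b → ¬G.Adj a b}

/-!
Deleting a vertex of degree `< d` together with its neighbours removes at most `d` vertices, so
if every nonempty vertex set spans a vertex of degree `< d`, greedily collecting such vertices
yields an independent set of size at least `n / d`. With `d = ⌈n/α⌉ - 1` we have `d α < n`, so
some nonempty vertex set `T` induces a subgraph of minimum degree at least `d`; the Rayleigh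
quotient of the indicator vector of `T` is then at least `d`, and it is at most `μ(G)`.
-/

open Matrix Finset

theorem Matrix.IsHermitian.dotProduct_mulVec_le_sSup_spectrum {ι : Type*} [Fintype ι]
    [DecidableEq ι] {A : Matrix ι ι ℝ} (hA : A.IsHermitian) (x : ι → ℝ) :
    x ⬝ᵥ (A *ᵥ x) ≤ sSup (spectrum ℝ A) * (x ⬝ᵥ x) := by
  set μ := sSup (spectrum ℝ A)
  have hpsd : (algebraMap ℝ _ μ - A).PosSemidef := by
    refine posSemidef_iff_isHermitian_and_spectrum_nonneg.mpr ⟨?_, ?_⟩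
    · rw [Algebra.algebraMap_eq_smul_one]
      exact (isHermitian_one.smul (IsSelfAdjoint.all μ)).sub hA
    · rw [← spectrum.singleton_sub_eq]
      rintro _ ⟨_, rfl, ν, hν, rfl⟩
      exact sub_nonneg.mpr (le_csSup A.finite_real_spectrum.bddAbove hν)
  simpa [sub_mulVec, Algebra.algebraMap_eq_smul_one, smul_mulVec, dotProduct_smul] using
    hpsd.dotProduct_mulVec_nonneg x

theorem indepNum_eq_indepNum {V : Type*} [Fintype V] (G : SimpleGraph V) :
    _root_.indepNum G = G.indepNum := by
  simp only [_root_.indepNum, SimpleGraph.indepNum, isNIndepSet_iff, isIndepSet_iff]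
  simp_rw [and_comm (a := #_ = _)]
  rfl

theorem SimpleGraph.one_le_indepNum {V : Type*} [Fintype V] [Nonempty V] (G : SimpleGraph V) :
    1 ≤ G.indepNum := by
  inhabit V
  have hsingleton : G.IsIndepSet (({default} : Finset V) : Set V) := by simp [isIndepSet_iff]
  simpa using hsingleton.card_le_indepNum

namespace SimpleGraph
variable {V : Type*} [Fintype V] [DecidableEq V] (G : SimpleGraph V) [DecidableRel G.Adj]

theorem exists_isIndepSet_card_le_mul (d : ℕ) (S : Finset V)
    (h : ∀ T ⊆ S, T.Nonempty → ∃ v ∈ T, #(G.neighborFinset v ∩ T) < d) :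
    ∃ I ⊆ S, G.IsIndepSet (I : Set V) ∧ #S ≤ d * #I := by
  induction S using Finset.strongInduction with
  | H S ih =>
  rcases S.eq_empty_or_nonempty with rfl | hS
  · exact ⟨∅, empty_subset _, by simp, by simp⟩
  obtain ⟨v, hvS, hv⟩ := h S subset_rfl hS
  set N := insert v (G.neighborFinset v ∩ S)
  have hNS : N ⊆ S := insert_subset hvS inter_subset_right
  obtain ⟨I, hIS, hI, hcard⟩ := ih (S \ N) (sdiff_ssubset hNS (insert_nonempty _ _))
    fun T hT hTne => h T (hT.trans sdiff_subset) hTne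
  have hvI : ∀ w ∈ I, w ∉ N := fun w hw => (mem_sdiff.mp (hIS hw)).2
  refine ⟨insert v I, insert_subset hvS (hIS.trans sdiff_subset), ?_, ?_⟩
  · have hvw : ∀ w ∈ I, ¬G.Adj v w := fun w hw hadj => hvI w hw <| mem_insert_of_mem <|
      mem_inter.mpr ⟨(mem_neighborFinset _ _ _).mpr hadj, (mem_sdiff.mp (hIS hw)).1⟩
    rw [coe_insert, isIndepSet_iff, Set.pairwise_insert]
    exact ⟨hI, fun w hw _ => ⟨hvw w hw, fun hadj => hvw w hw hadj.symm⟩⟩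
  · rw [card_insert_of_notMem fun hv => hvI v hv (mem_insert_self _ _), mul_add_one]
    calc #S = #(S \ N) + #N := (card_sdiff_add_card_eq_card hNS).symm
      _ ≤ d * #I + d := add_le_add hcard ((card_insert_le _ _).trans hv)

theorem exists_nonempty_le_card_neighborFinset_inter {d : ℕ}
    (h : d * G.indepNum < Fintype.card V) :
    ∃ T : Finset V, T.Nonempty ∧ ∀ v ∈ T, d ≤ #(G.neighborFinset v ∩ T) := by
  by_contra! hT
  obtain ⟨I, -, hI, hcard⟩ := G.exists_isIndepSet_card_le_mul d univ fun T _ => hT T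
  have := hcard.trans (Nat.mul_le_mul_left d hI.card_le_indepNum)
  rw [card_univ] at this
  omega

theorem indicator_dotProduct_adjMatrix_mulVec_indicator {α : Type*} [NonAssocSemiring α]
    (T : Finset V) :
    (T : Set V).indicator 1 ⬝ᵥ (G.adjMatrix α *ᵥ (T : Set V).indicator 1) =
      ∑ v ∈ T, (#(G.neighborFinset v ∩ T) : α) := by
  simp [dotProduct, adjMatrix_mulVec_apply, Set.indicator_apply]

theorem le_sSup_spectrum_adjMatrix {d : ℕ} {T : Finset V} (hT : T.Nonempty)
    (hdeg : ∀ v ∈ T, d ≤ #(G.neighborFinset v ∩ T)) :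
    (d : ℝ) ≤ sSup (spectrum ℝ (G.adjMatrix ℝ)) := by
  have hA : (G.adjMatrix ℝ).IsHermitian := G.isSymm_adjMatrix
  have hquad := hA.dotProduct_mulVec_le_sSup_spectrum ((T : Set V).indicator 1)
  have hnorm : (T : Set V).indicator (1 : V → ℝ) ⬝ᵥ (T : Set V).indicator 1 = #T := by
    simp [dotProduct, Set.indicator_apply]
  rw [indicator_dotProduct_adjMatrix_mulVec_indicator, hnorm] at hquad
  have hsum : #T * (d : ℝ) ≤ ∑ v ∈ T, (#(G.neighborFinset v ∩ T) : ℝ) := by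
    rw [← nsmul_eq_mul, ← sum_const]
    exact sum_le_sum fun v hv => by exact_mod_cast hdeg v hv
  have hTpos : (0 : ℝ) < #T := by exact_mod_cast hT.card_pos
  exact le_of_mul_le_mul_left (hsum.trans (hquad.trans_eq (mul_comm _ _))) hTpos

end SimpleGraph

/-- If `G` is a graph on `n ≥ 1` vertices with independence number `α`, then
`μ(G) ≥ ⌈n/α⌉ - 1`. -/
theorem statement15 (n α : ℕ) (hn : 1 ≤ n)
    (G : SimpleGraph (Fin n)) [DecidableRel G.Adj]
    (hα : _root_.indepNum G = α) :
    ((⌈(n : ℝ) / (α : ℝ)⌉ : ℤ) : ℝ) - 1 ≤ specRad G := by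
  have : Nonempty (Fin n) := Fin.pos_iff_nonempty.mp hn
  rw [indepNum_eq_indepNum] at hα
  subst hα
  have hαpos : (0 : ℝ) < G.indepNum := by exact_mod_cast G.one_le_indepNum
  have hratio : 0 < (n : ℝ) / G.indepNum := div_pos (by exact_mod_cast hn) hαpos
  obtain ⟨d, hd⟩ := Nat.exists_eq_add_one.mpr (Nat.ceil_pos.mpr hratio)
  have hceil : ⌈(n : ℝ) / G.indepNum⌉ = d + 1 := by
    rw [← Int.natCast_ceil_eq_ceil hratio.le, hd, Nat.cast_succ]
  have hdα : d * G.indepNum < Fintype.card (Fin n) := by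
    have hlt := Nat.ceil_lt_add_one hratio.le
    rw [hd, Nat.cast_succ, add_lt_add_iff_right, lt_div_iff₀ hαpos] at hlt
    rw [Fintype.card_fin]
    exact_mod_cast hlt
  obtain ⟨T, hT, hdeg⟩ := G.exists_nonempty_le_card_neighborFinset_inter hdα
  rw [hceil, specRad]
  push_cast
  linarith [G.le_sSup_spectrum_adjMatrix hT hdeg]
end
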